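/- arXiv:1012.3952 — 5 statements merged into one kernel-verified Lean document; each statement's English description precedes it below -/
import Mathlib

section
/- For a positive integer m, the largest k such that the binomial coefficient C(m+1, k) is odd and k ≤ m equals m + 1 - 2^{ν(m+1)}, where ν is the 2-adic valuation. -/
/-!
Over `𝔽₂` the Frobenius gives `(X + 1) ^ (2 ^ v * u) = (X ^ 2 ^ v + 1) ^ u`, so with
`v = ν(n)` and `n = 2 ^ v * u`, `u` odd, the binomial coefficient `C(n, d)` is even for
`0 < d < 2 ^ v` and `C(n, 2 ^ v) ≡ u` is odd. By the symmetry `C(n, k) = C(n, n - k)`,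
the largest `k < n` with `C(n, k)` odd is `n - 2 ^ v`.
-/

open Polynomial

theorem Nat.cast_choose_prime_pow_mul (p : ℕ) [Fact p.Prime] (v u d : ℕ) :
    ((p ^ v * u).choose d : ZMod p) =
      if p ^ v ∣ d then (u.choose (d / p ^ v) : ZMod p) else 0 := by
  have frobenius_expand :
      ((X + 1) ^ (p ^ v * u) : (ZMod p)[X]) = expand (ZMod p) (p ^ v) ((X + 1) ^ u) := by
    rw [pow_mul, add_pow_char_pow, one_pow, map_pow, map_add, expand_X, map_one]
  rw [← coeff_X_add_one_pow, frobenius_expand,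
    coeff_expand (Nat.pow_pos (Fact.out : p.Prime).pos), coeff_X_add_one_pow]

theorem Nat.even_choose_of_two_pow_dvd {n v d : ℕ} (hn : 2 ^ v ∣ n) (hd₀ : 0 < d)
    (hd : d < 2 ^ v) : Even (n.choose d) := by
  obtain ⟨u, rfl⟩ := hn
  have hndvd : ¬ 2 ^ v ∣ d := fun h => (Nat.le_of_dvd hd₀ h).not_gt hd
  rw [← ZMod.natCast_eq_zero_iff_even, Nat.cast_choose_prime_pow_mul, if_neg hndvd]

theorem Nat.odd_choose_two_pow_mul_odd (v : ℕ) {u : ℕ} (hu : Odd u) :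
    Odd ((2 ^ v * u).choose (2 ^ v)) := by
  rw [← ZMod.natCast_eq_one_iff_odd, Nat.cast_choose_prime_pow_mul, if_pos dvd_rfl,
    Nat.div_self (Nat.two_pow_pos v), Nat.choose_one_right, ZMod.natCast_eq_one_iff_odd]
  exact hu

theorem Nat.exists_odd_eq_two_pow_padicValNat_mul {n : ℕ} (hn : n ≠ 0) :
    ∃ u, Odd u ∧ n = 2 ^ padicValNat 2 n * u := by
  obtain ⟨u, hu⟩ : 2 ^ padicValNat 2 n ∣ n := pow_padicValNat_dvd
  refine ⟨u, ?_, hu⟩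
  rw [← Nat.not_even_iff_odd, even_iff_two_dvd]
  rintro ⟨w, rfl⟩
  exact pow_succ_padicValNat_not_dvd hn ⟨w, by rw [pow_succ, mul_assoc, ← hu]⟩

theorem stmt_3_general (m : ℕ) :
    IsGreatest {k : ℕ | k ≤ m ∧ Odd ((m + 1).choose k)}
      (m + 1 - 2 ^ padicValNat 2 (m + 1)) := by
  obtain ⟨u, hu_odd, hu⟩ := Nat.exists_odd_eq_two_pow_padicValNat_mul m.add_one_ne_zero
  set v := padicValNat 2 (m + 1)
  have hv_dvd : 2 ^ v ∣ m + 1 := ⟨u, hu⟩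
  have hv_le : 2 ^ v ≤ m + 1 := Nat.le_of_dvd m.add_one_pos hv_dvd
  have hv_pos : 0 < 2 ^ v := Nat.two_pow_pos v
  refine ⟨⟨by omega, ?_⟩, ?_⟩
  · rw [Nat.choose_symm hv_le, hu]
    exact Nat.odd_choose_two_pow_mul_odd v hu_odd
  · rintro k ⟨hk, hodd⟩
    by_contra! hlt
    rw [← Nat.choose_symm (by omega : k ≤ m + 1)] at hodd
    exact Nat.not_even_iff_odd.mpr hodd
      (Nat.even_choose_of_two_pow_dvd hv_dvd (by omega) (by omega))

/-- For a positive integer m, the largest k ≤ m with C(m+1,k) odd is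
m + 1 - 2^{ν(m+1)}. -/
theorem stmt_3 (m : ℕ) (hm : 0 < m) :
    IsGreatest {k : ℕ | k ≤ m ∧ Odd ((m + 1).choose k)}
      (m + 1 - 2 ^ padicValNat 2 (m + 1)) :=
  stmt_3_general m
end

section
/- Over the field of fractions of F_2[z1, z2, z3], the system of three linear equations f0 = f1·z1^{-1} + f2·z1^{-3} + z1^{-7}, f1 = f0·z2 + f2·z2^{-2} + z2^{-6}, f2 = f0·z3^3 + f1·z3^2 + z3^{-4} in the unknowns f0, f1, f2 has a unique solution, and its f0-component equals z1^{-1}z2^{-2}z3^{-4} + z1^{-1}z2^{-4}z3^{-2} + z1^{-2}z2^{-1}z3^{-4} + z1^{-2}z2^{-4}z3^{-1} + z1^{-4}z2^{-1}z3^{-2} + z1^{-4}z2^{-2}z3^{-1}. -/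
open MvPolynomial

/-- The field F₂(z₁,z₂,z₃) of rational functions over the field with two elements. -/
noncomputable abbrev K5 : Type := FractionRing (MvPolynomial (Fin 3) (ZMod 2))

noncomputable def z5 (i : Fin 3) : K5 :=
  algebraMap (MvPolynomial (Fin 3) (ZMod 2)) K5 (X i)

/-- The system f0 = f1·z1⁻¹ + f2·z1⁻³ + z1⁻⁷, f1 = f0·z2 + f2·z2⁻² + z2⁻⁶,
f2 = f0·z3³ + f1·z3² + z3⁻⁴ over F₂(z1,z2,z3). -/
def Eqs5 (f : K5 × K5 × K5) : Prop :=
  f.1 = f.2.1 * (z5 0) ^ (-1 : ℤ) + f.2.2 * (z5 0) ^ (-3 : ℤ) + (z5 0) ^ (-7 : ℤ) ∧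
  f.2.1 = f.1 * (z5 1) + f.2.2 * (z5 1) ^ (-2 : ℤ) + (z5 1) ^ (-6 : ℤ) ∧
  f.2.2 = f.1 * (z5 2) ^ 3 + f.2.1 * (z5 2) ^ 2 + (z5 2) ^ (-4 : ℤ)

/-! In characteristic 2, substituting `u = zᵢ⁻¹` and clearing denominators turns each of the
three equations into the statement that `u` is a root of `X⁷ + f₂ X³ + f₁ X + f₀`. A polynomial of
this shape is determined by three distinct roots with nonzero sum, which gives uniqueness. A
solution comes from the Dickson invariants of `u₀, u₁, u₂`: `X⁸ + f₂ X⁴ + f₁ X² + f₀ X` is the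
additive polynomial `∏ (X - v)` over the `𝔽₂`-span of the `uᵢ`, and its linear coefficient is the
Moore determinant `∑ uᵢ uⱼ² uₖ⁴`. -/

section Interpolation

variable {F : Type*} [Field F]

def IsRootOfSeptic (f : F × F × F) (u : F) : Prop :=
  u ^ 7 = f.1 + f.2.1 * u + f.2.2 * u ^ 3

theorem eq_zero_of_three_roots {a b c p q r : F} (hpq : p ≠ q) (hpr : p ≠ r) (hqr : q ≠ r)
    (hs : p + q + r ≠ 0) (hp : a + b * p + c * p ^ 3 = 0) (hq : a + b * q + c * q ^ 3 = 0)
    (hr : a + b * r + c * r ^ 3 = 0) : a = 0 ∧ b = 0 ∧ c = 0 := by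
  have hc : c = 0 := by
    have : c * ((p - q) * (p - r) * (q - r) * (p + q + r)) = 0 := by
      linear_combination (q - r) * hp + (r - p) * hq + (p - q) * hr
    simpa [sub_ne_zero.2 hpq, sub_ne_zero.2 hpr, sub_ne_zero.2 hqr, hs] using this
  have hb : b = 0 := by
    have : b * (p - q) = 0 := by linear_combination hp - hq - (p ^ 3 - q ^ 3) * hc
    simpa [sub_ne_zero.2 hpq] using this
  exact ⟨by linear_combination hp - p * hb - p ^ 3 * hc, hb, hc⟩

theorem eq_of_isRootOfSeptic {f g : F × F × F} {p q r : F} (hpq : p ≠ q) (hpr : p ≠ r)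
    (hqr : q ≠ r) (hs : p + q + r ≠ 0) (hf : ∀ u ∈ ({p, q, r} : Set F), IsRootOfSeptic f u)
    (hg : ∀ u ∈ ({p, q, r} : Set F), IsRootOfSeptic g u) : f = g := by
  simp only [IsRootOfSeptic] at hf hg
  have hdiff : ∀ u ∈ ({p, q, r} : Set F),
      (f.1 - g.1) + (f.2.1 - g.2.1) * u + (f.2.2 - g.2.2) * u ^ 3 = 0 := fun u hu => by
    linear_combination hg u hu - hf u hu
  obtain ⟨h1, h2, h3⟩ := eq_zero_of_three_roots hpq hpr hqr hs
    (hdiff p (by simp)) (hdiff q (by simp)) (hdiff r (by simp))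
  exact Prod.ext (sub_eq_zero.1 h1) (Prod.ext (sub_eq_zero.1 h2) (sub_eq_zero.1 h3))

def dicksonTriple (p q r : F) : F × F × F :=
  (p * q ^ 2 * r ^ 4 + p * q ^ 4 * r ^ 2 + p ^ 2 * q * r ^ 4 + p ^ 2 * q ^ 4 * r
      + p ^ 4 * q * r ^ 2 + p ^ 4 * q ^ 2 * r,
    p ^ 4 * q ^ 2 + p ^ 2 * q ^ 4 + p ^ 4 * r ^ 2 + p ^ 2 * r ^ 4 + q ^ 4 * r ^ 2 + q ^ 2 * r ^ 4
      + p ^ 2 * q ^ 2 * r ^ 2 + p * q * r * (p ^ 3 + q ^ 3 + r ^ 3),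
    p ^ 4 + q ^ 4 + r ^ 4 + p ^ 2 * q ^ 2 + p ^ 2 * r ^ 2 + q ^ 2 * r ^ 2 + p * q * r * (p + q + r))

variable [CharP F 2]

theorem isRootOfSeptic_dicksonTriple (p q r : F) :
    ∀ u ∈ ({p, q, r} : Set F), IsRootOfSeptic (dicksonTriple p q r) u := by
  simp only [Set.mem_insert_iff, Set.mem_singleton_iff, forall_eq_or_imp, forall_eq]
  refine ⟨?_, ?_, ?_⟩ <;>
  · simp only [IsRootOfSeptic, dicksonTriple]
    ring_nf
    reduce_mod_char!

variable {t x y z : F}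

theorem isRootOfSeptic_inv_iff_fst : IsRootOfSeptic (x, y, z) t⁻¹ ↔
    x = y * t ^ (-1 : ℤ) + z * t ^ (-3 : ℤ) + t ^ (-7 : ℤ) := by
  simp only [IsRootOfSeptic, zpow_neg, zpow_ofNat, inv_pow]
  rw [eq_comm, CharTwo.add_eq_iff_eq_add, CharTwo.add_eq_iff_eq_add]
  ring_nf

theorem isRootOfSeptic_inv_iff_snd (ht : t ≠ 0) : IsRootOfSeptic (x, y, z) t⁻¹ ↔
    y = x * t + z * t ^ (-2 : ℤ) + t ^ (-6 : ℤ) := by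
  simp only [IsRootOfSeptic, zpow_neg, zpow_ofNat, inv_pow]
  constructor <;> intro h <;> field_simp at h ⊢ <;>
    linear_combination (norm := ring_nf) h <;> reduce_mod_char!

theorem isRootOfSeptic_inv_iff_thd (ht : t ≠ 0) : IsRootOfSeptic (x, y, z) t⁻¹ ↔
    z = x * t ^ 3 + y * t ^ 2 + t ^ (-4 : ℤ) := by
  simp only [IsRootOfSeptic, zpow_neg, zpow_ofNat, inv_pow]
  constructor <;> intro h <;> field_simp at h ⊢ <;>
    linear_combination (norm := ring_nf) h <;> reduce_mod_char!

end Interpolation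

theorem z5_injective : Function.Injective z5 :=
  (IsFractionRing.injective (MvPolynomial (Fin 3) (ZMod 2)) K5).comp (X_injective (R := ZMod 2))

theorem z5_ne_zero (i : Fin 3) : z5 i ≠ 0 :=
  (map_ne_zero_iff _ (IsFractionRing.injective _ K5)).2 (X_ne_zero i)

theorem inv_z5_add_inv_z5_add_inv_z5_ne_zero : (z5 0)⁻¹ + (z5 1)⁻¹ + (z5 2)⁻¹ ≠ 0 := by
  have hnum : z5 1 * z5 2 + z5 0 * z5 2 + z5 0 * z5 1 ≠ 0 := by
    have hX : (X 1 * X 2 + X 0 * X 2 + X 0 * X 1 : MvPolynomial (Fin 3) (ZMod 2)) ≠ 0 := fun h => by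
      have := congrArg (eval 1) h
      simp only [map_add, map_mul, eval_X, Pi.one_apply, mul_one] at this
      exact absurd this (by decide)
    simpa [z5] using (map_ne_zero_iff _ (IsFractionRing.injective _ K5)).2 hX
  have h0 := z5_ne_zero 0
  have h1 := z5_ne_zero 1
  have h2 := z5_ne_zero 2
  rw [show (z5 0)⁻¹ + (z5 1)⁻¹ + (z5 2)⁻¹
      = (z5 1 * z5 2 + z5 0 * z5 2 + z5 0 * z5 1) / (z5 0 * z5 1 * z5 2) by field_simp]
  exact div_ne_zero hnum (by simp [h0, h1, h2])

theorem eqs5_iff (f : K5 × K5 × K5) :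
    Eqs5 f ↔ ∀ u ∈ ({(z5 0)⁻¹, (z5 1)⁻¹, (z5 2)⁻¹} : Set K5), IsRootOfSeptic f u := by
  obtain ⟨x, y, z⟩ := f
  simp only [Set.mem_insert_iff, Set.mem_singleton_iff, forall_eq_or_imp, forall_eq,
    isRootOfSeptic_inv_iff_fst, isRootOfSeptic_inv_iff_snd (z5_ne_zero 1),
    isRootOfSeptic_inv_iff_thd (z5_ne_zero 2)]
  rfl

/-- The system has a unique solution, and its f0-component equals
z1⁻¹z2⁻²z3⁻⁴ + z1⁻¹z2⁻⁴z3⁻² + z1⁻²z2⁻¹z3⁻⁴ + z1⁻²z2⁻⁴z3⁻¹ + z1⁻⁴z2⁻¹z3⁻² + z1⁻⁴z2⁻²z3⁻¹. -/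
theorem stmt_5 :
    (∃! f : K5 × K5 × K5, Eqs5 f) ∧
    ∀ f : K5 × K5 × K5, Eqs5 f →
      f.1 = (z5 0) ^ (-1 : ℤ) * (z5 1) ^ (-2 : ℤ) * (z5 2) ^ (-4 : ℤ)
        + (z5 0) ^ (-1 : ℤ) * (z5 1) ^ (-4 : ℤ) * (z5 2) ^ (-2 : ℤ)
        + (z5 0) ^ (-2 : ℤ) * (z5 1) ^ (-1 : ℤ) * (z5 2) ^ (-4 : ℤ)
        + (z5 0) ^ (-2 : ℤ) * (z5 1) ^ (-4 : ℤ) * (z5 2) ^ (-1 : ℤ)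
        + (z5 0) ^ (-4 : ℤ) * (z5 1) ^ (-1 : ℤ) * (z5 2) ^ (-2 : ℤ)
        + (z5 0) ^ (-4 : ℤ) * (z5 1) ^ (-2 : ℤ) * (z5 2) ^ (-1 : ℤ) := by
  have hinj : Function.Injective fun i => (z5 i)⁻¹ := inv_injective.comp z5_injective
  have hunique (f : K5 × K5 × K5) (hf : Eqs5 f) :
      f = dicksonTriple (z5 0)⁻¹ (z5 1)⁻¹ (z5 2)⁻¹ :=
    eq_of_isRootOfSeptic (hinj.ne (by decide)) (hinj.ne (by decide)) (hinj.ne (by decide))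
      inv_z5_add_inv_z5_add_inv_z5_ne_zero ((eqs5_iff f).1 hf) (isRootOfSeptic_dicksonTriple _ _ _)
  refine ⟨⟨_, (eqs5_iff _).2 (isRootOfSeptic_dicksonTriple _ _ _), hunique⟩, fun f hf => ?_⟩
  rw [hunique f hf]
  simp only [dicksonTriple, zpow_neg, zpow_ofNat, pow_one, inv_pow]
end

section
/- Let e ≥ 1 and 0 ≤ k < 2^e - 2. Suppose (i_ℓ, j_ℓ, k_ℓ) for ℓ = 1, ..., d are triples, each a permutation of (2^{t_ℓ}, 2^{t_ℓ+1}, 2^{t_ℓ+2}) for distinct nonnegative integers t_ℓ with Σ_ℓ 2^{t_ℓ} = 2^e + k + 1. If Σ_ℓ k_ℓ = 2^{e+2} + 4k + 4, then Σ_ℓ j_ℓ ≤ 2^{e+1} + 2k + 2, and consequently 2^{e+2} - Σ_ℓ j_ℓ > 2^e - k - 1. -/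
/-- `p` is one of the six permutations of the triple `(a,b,c)`. -/
def IsPerm3 (p : ℕ × ℕ × ℕ) (a b c : ℕ) : Prop :=
  p ∈ ({(a, b, c), (a, c, b), (b, a, c), (b, c, a), (c, a, b), (c, b, a)} :
    Set (ℕ × ℕ × ℕ))

/-- Let e ≥ 1, 0 ≤ k < 2^e - 2, and let (iₗ, jₗ, kₗ) for ℓ = 1,…,d be permutations of
(2^{tₗ}, 2^{tₗ+1}, 2^{tₗ+2}) for distinct nonnegative integers tₗ with
Σ 2^{tₗ} = 2^e + k + 1.  If Σ kₗ = 2^{e+2} + 4k + 4 then Σ jₗ ≤ 2^{e+1} + 2k + 2, and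
consequently 2^{e+2} - Σ jₗ > 2^e - k - 1. -/
theorem stmt_11 (e k d : ℕ) (he : 1 ≤ e) (hk : k < 2 ^ e - 2)
    (t : Fin d → ℕ) (ht : Function.Injective t)
    (tr : Fin d → ℕ × ℕ × ℕ)
    (htr : ∀ ℓ, IsPerm3 (tr ℓ) (2 ^ t ℓ) (2 ^ (t ℓ + 1)) (2 ^ (t ℓ + 2)))
    (hsum : ∑ ℓ, 2 ^ t ℓ = 2 ^ e + k + 1)
    (hk3 : ∑ ℓ, (tr ℓ).2.2 = 2 ^ (e + 2) + 4 * k + 4) :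
    ∑ ℓ, (tr ℓ).2.1 ≤ 2 ^ (e + 1) + 2 * k + 2 ∧
    (2 ^ e : ℤ) - k - 1 < (2 ^ (e + 2) : ℤ) - ∑ ℓ, ((tr ℓ).2.1 : ℤ) := by
  have hle : ∀ ℓ, (tr ℓ).2.1 + (tr ℓ).2.2 ≤ 6 * 2 ^ t ℓ := by
    intro ℓ
    have h := htr ℓ
    have h1 : (2 : ℕ) ^ (t ℓ + 1) = 2 * 2 ^ t ℓ := by ring
    have h2 : (2 : ℕ) ^ (t ℓ + 2) = 4 * 2 ^ t ℓ := by ring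
    simp only [IsPerm3, Set.mem_insert_iff, Set.mem_singleton_iff] at h
    rcases h with h | h | h | h | h | h <;> rw [h] <;> dsimp <;>
      simp only [h1, h2] <;> omega
  have hsum2 : ∑ ℓ, ((tr ℓ).2.1 + (tr ℓ).2.2) ≤ ∑ ℓ, 6 * 2 ^ t ℓ :=
    Finset.sum_le_sum fun ℓ _ => hle ℓ
  rw [Finset.sum_add_distrib, ← Finset.mul_sum, hsum, hk3] at hsum2
  have hp4 : (2 : ℕ) ^ (e + 2) = 4 * 2 ^ e := by ring
  have hp2 : (2 : ℕ) ^ (e + 1) = 2 * 2 ^ e := by ring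
  have h1 : ∑ ℓ, (tr ℓ).2.1 ≤ 2 ^ (e + 1) + 2 * k + 2 := by omega
  refine ⟨h1, ?_⟩
  have hc : (∑ ℓ, ((tr ℓ).2.1 : ℤ)) = ((∑ ℓ, (tr ℓ).2.1 : ℕ) : ℤ) := by
    push_cast; rfl
  rw [hc]
  have h2 : ((∑ ℓ, (tr ℓ).2.1 : ℕ) : ℤ) ≤ 2 ^ (e + 1) + 2 * k + 2 := by
    exact_mod_cast h1
  have h3 : (2 : ℤ) ^ e ≥ k + 2 := by
    have : k + 2 < 2 ^ e := by omega
    exact_mod_cast this.le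
  have hp : (2 : ℤ) ^ (e + 2) = 4 * 2 ^ e := by ring
  have hq : (2 : ℤ) ^ (e + 1) = 2 * 2 ^ e := by ring
  linarith
end

section
/- Define a weight on monomials v_0^{a}v_1^{b}v_2^{c}v_3^{d}·z1^{p}z2^{q}z3^{s} by W = 3p + q - 2a + c. Then each of the three substitution rules — replacing v_0 by v_1 z_1^{-1} + v_2 z_1^{-3} + v_3 z_1^{-7}, replacing v_1 by v_0 z_2 + v_2 z_2^{-2} + v_3 z_2^{-6}, and replacing v_2 by v_0 z_3^3 + v_1 z_3^2 + v_3 z_3^{-4} — strictly decreases W on every resulting monomial. -/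
/-- The weight W = 3p + q - 2a + c of the monomial v₀^a v₁^b v₂^c v₃^d z₁^p z₂^q z₃^s. -/
def W13 (a _b c _d : ℕ) (p q _s : ℤ) : ℤ := 3 * p + q - 2 * (a : ℤ) + (c : ℤ)

/-- Each of the three substitution rules v₀ ↦ v₁z₁⁻¹ + v₂z₁⁻³ + v₃z₁⁻⁷,
v₁ ↦ v₀z₂ + v₂z₂⁻² + v₃z₂⁻⁶, v₂ ↦ v₀z₃³ + v₁z₃² + v₃z₃⁻⁴ strictly decreases the
weight W = 3p + q - 2a + c on every resulting monomial. -/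
theorem stmt_13 (a b c d : ℕ) (p q s : ℤ) :
    (1 ≤ a →
      W13 (a - 1) (b + 1) c d (p - 1) q s < W13 a b c d p q s ∧
      W13 (a - 1) b (c + 1) d (p - 3) q s < W13 a b c d p q s ∧
      W13 (a - 1) b c (d + 1) (p - 7) q s < W13 a b c d p q s) ∧
    (1 ≤ b →
      W13 (a + 1) (b - 1) c d p (q + 1) s < W13 a b c d p q s ∧
      W13 a (b - 1) (c + 1) d p (q - 2) s < W13 a b c d p q s ∧
      W13 a (b - 1) c (d + 1) p (q - 6) s < W13 a b c d p q s) ∧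
    (1 ≤ c →
      W13 (a + 1) b (c - 1) d p q (s + 3) < W13 a b c d p q s ∧
      W13 a (b + 1) (c - 1) d p q (s + 2) < W13 a b c d p q s ∧
      W13 a b (c - 1) (d + 1) p q (s - 4) < W13 a b c d p q s) := by
  refine ⟨fun h => ?_, fun h => ?_, fun h => ?_⟩ <;>
    simp only [W13] <;>
    refine ⟨?_, ?_, ?_⟩ <;>
    · push_cast [Nat.cast_sub h]
      omega
end

section
/- If n is a positive integer not congruent to 15 mod 16, and m ∈ {1, 3, 7} or neither m+1 nor n+1 is divisible by 16, then V(m) + V(n) ≤ 2^{ν(m+1)} + 2^{ν(n+1)} - 2. -/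
lemma aux_key (a b : ℕ) (hb : b ≤ 3) : 8 * a + 2 ^ b ≤ 2 ^ (4 * a + b) := by
  induction a with
  | zero => simpa using Nat.le_refl _
  | succ a ih =>
      have h1 : 2 ^ (4 * (a + 1) + b) = 16 * 2 ^ (4 * a + b) := by ring
      have h2 : (1 : ℕ) ≤ 2 ^ (4 * a + b) := Nat.one_le_two_pow
      omega

/-- If n is a positive integer not congruent to 15 mod 16, and m ∈ {1,3,7} or neither
m+1 nor n+1 is divisible by 16, then V(m) + V(n) ≤ 2^{ν(m+1)} + 2^{ν(n+1)} - 2, where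
V(n) = 8a + 2^b - 1 with ν(n+1) = 4a + b, 0 ≤ b ≤ 3. -/
theorem stmt_14 (m n a b a' b' : ℕ) (hb : b ≤ 3) (hb' : b' ≤ 3)
    (hm : padicValNat 2 (m + 1) = 4 * a + b)
    (hn : padicValNat 2 (n + 1) = 4 * a' + b')
    (hn0 : 0 < n) (h15 : n % 16 ≠ 15)
    (hcase : m = 1 ∨ m = 3 ∨ m = 7 ∨ (¬ 16 ∣ (m + 1) ∧ ¬ 16 ∣ (n + 1))) :
    (8 * a + 2 ^ b - 1) + (8 * a' + 2 ^ b' - 1) ≤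
      2 ^ padicValNat 2 (m + 1) + 2 ^ padicValNat 2 (n + 1) - 2 := by
  rw [hm, hn]
  have h1 := aux_key a b hb
  have h2 := aux_key a' b' hb'
  have p1 : (1 : ℕ) ≤ 2 ^ b := Nat.one_le_two_pow
  have p2 : (1 : ℕ) ≤ 2 ^ b' := Nat.one_le_two_pow
  omega
end
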